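/- arXiv:0806.0880 — 2 statements merged into one kernel-verified Lean document; each statement's English description precedes it below -/
import Mathlib

section
/- Let (ℓₙ) be a sequence of positive reals with ℓₙ ≤ 1 and let (Xₙ) be a sequence of independent random points uniformly distributed on the circle 𝕋 = ℝ/ℤ. If ∑ₙ ℓₙ = ∞, then almost surely the Lebesgue measure of E_ℓ = limsupₙ A(Xₙ, ℓₙ) equals 1. -/
/-! For a fixed point `y`, the events `y ∈ A(Xₙ, ℓₙ)`, i.e. `Xₙ ∈ A(y, ℓₙ)`, are independent
with probabilities `ℓₙ`, so the second Borel–Cantelli lemma puts `y` in `E_ℓ` almost surely.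
Fubini on `Ω × 𝕋` exchanges "for every `y`, almost surely" with "almost surely, for almost
every `y`", which says that `E_ℓ` has full measure almost surely. -/

open MeasureTheory ProbabilityTheory Filter Set

/-- The circle `𝕋 = ℝ/ℤ`. -/
abbrev Circle1 := AddCircle (1:ℝ)

/-- The open arc of center `x` and length `l`. -/
def arc (x : Circle1) (l : ℝ) : Set Circle1 := Metric.ball x (l/2)

/-- The limsup set `⋂_N ⋃_{n ≥ N} A(xₙ, ℓₙ)`. -/
def limsupArcs (x : ℕ → Circle1) (ℓ : ℕ → ℝ) : Set Circle1 :=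
  ⋂ N, ⋃ n, ⋃ (_ : n ≥ N), arc (x n) (ℓ n)

lemma ENNReal.tsum_ofReal_eq_top_of_not_summable {f : ℕ → ℝ} (hf : ∀ n, 0 ≤ f n)
    (h : ¬ Summable f) : ∑' n, ENNReal.ofReal (f n) = ⊤ := by
  by_contra hne
  exact h <| (ENNReal.summable_toReal hne).congr fun n => ENNReal.toReal_ofReal (hf n)

theorem ProbabilityTheory.iIndepFun.ae_frequently_mem {Ω β : Type*} [MeasurableSpace Ω]
    [MeasurableSpace β] {μ : Measure Ω} {X : ℕ → Ω → β} (hmeas : ∀ n, Measurable (X n))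
    (hindep : iIndepFun X μ) {t : ℕ → Set β} (ht : ∀ n, MeasurableSet (t n))
    (hsum : ∑' n, μ (X n ⁻¹' t n) = ⊤) : ∀ᵐ ω ∂μ, ∃ᶠ n in atTop, X n ω ∈ t n := by
  have := hindep.isProbabilityMeasure
  have hsm : ∀ n, MeasurableSet (X n ⁻¹' t n) := fun n => hmeas n (ht n)
  have hsets : iIndepSet (fun n => X n ⁻¹' t n) μ :=
    (iIndepSet_iff_meas_biInter hsm).2 fun s =>
      hindep.meas_biInter fun n _ => ⟨t n, ht n, rfl⟩
  have hlimsup := measure_limsup_eq_one hsm hsets hsum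
  rw [← measure_univ (μ := μ), ← ae_mem_iff_measure_eq
    (MeasurableSet.measurableSet_limsup hsm).nullMeasurableSet] at hlimsup
  simpa only [mem_limsup_iff_frequently_mem, mem_preimage] using hlimsup

lemma measurableSet_arc (x : Circle1) (l : ℝ) : MeasurableSet (arc x l) :=
  measurableSet_ball

lemma volume_arc (x : Circle1) {l : ℝ} (hl : l ≤ 1) :
    volume (arc x l) = ENNReal.ofReal l := by
  rw [arc, ← measure_congr AddCircle.closedBall_ae_eq_ball, AddCircle.volume_closedBall,
    mul_div_cancel₀ _ two_ne_zero, min_eq_right hl]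

lemma limsupArcs_eq_limsup (x : ℕ → Circle1) (ℓ : ℕ → ℝ) :
    limsupArcs x ℓ = limsup (fun n => arc (x n) (ℓ n)) atTop :=
  limsup_eq_iInf_iSup_of_nat.symm

lemma mem_limsupArcs_iff {x : ℕ → Circle1} {ℓ : ℕ → ℝ} {y : Circle1} :
    y ∈ limsupArcs x ℓ ↔ ∃ᶠ n in atTop, x n ∈ arc y (ℓ n) := by
  simp only [limsupArcs_eq_limsup, mem_limsup_iff_frequently_mem, arc, Metric.mem_ball_comm]

lemma measurableSet_limsupArcs (x : ℕ → Circle1) (ℓ : ℕ → ℝ) :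
    MeasurableSet (limsupArcs x ℓ) := by
  rw [limsupArcs_eq_limsup]
  exact MeasurableSet.measurableSet_limsup fun n => measurableSet_arc _ _

lemma measurableSet_setOf_mem_limsupArcs {Ω : Type*} [MeasurableSpace Ω]
    {X : ℕ → Ω → Circle1} (hmeas : ∀ n, Measurable (X n)) (ℓ : ℕ → ℝ) :
    MeasurableSet {p : Ω × Circle1 | p.2 ∈ limsupArcs (fun n => X n p.1) ℓ} := by
  have hset : {p : Ω × Circle1 | p.2 ∈ limsupArcs (fun n => X n p.1) ℓ} =
      limsup (fun n => {p : Ω × Circle1 | dist (X n p.1) p.2 < ℓ n / 2}) atTop := by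
    ext p
    simp only [mem_ofPred_eq, mem_limsupArcs_iff, mem_limsup_iff_frequently_mem, arc,
      Metric.mem_ball]
  rw [hset]
  exact MeasurableSet.measurableSet_limsup fun n =>
    measurableSet_lt (((hmeas n).comp measurable_fst).dist measurable_snd) measurable_const

theorem stmt1_general {Ω : Type*} [MeasurableSpace Ω] (μ : Measure Ω)
    (X : ℕ → Ω → Circle1) (hmeas : ∀ n, Measurable (X n))
    (hindep : iIndepFun X μ)
    (hunif : ∀ n, Measure.map (X n) μ = (volume : Measure Circle1))
    (ℓ : ℕ → ℝ) (hpos : ∀ n, 0 < ℓ n) (hle : ∀ n, ℓ n ≤ 1) (hdiv : ¬ Summable ℓ) :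
    ∀ᵐ ω ∂μ, volume (limsupArcs (fun n => X n ω) ℓ) = 1 := by
  have := hindep.isProbabilityMeasure
  have hsum : ∑' n, ENNReal.ofReal (ℓ n) = ⊤ :=
    ENNReal.tsum_ofReal_eq_top_of_not_summable (fun n => (hpos n).le) hdiv
  have hpoint : ∀ y, ∀ᵐ ω ∂μ, y ∈ limsupArcs (fun n => X n ω) ℓ := by
    intro y
    have hprob : ∀ n, μ (X n ⁻¹' arc y (ℓ n)) = ENNReal.ofReal (ℓ n) := fun n => by
      rw [← Measure.map_apply (hmeas n) (measurableSet_arc y _), hunif n,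
        volume_arc y (hle n)]
    simpa only [mem_limsupArcs_iff] using
      hindep.ae_frequently_mem hmeas (fun n => measurableSet_arc y _)
        (by simpa only [hprob] using hsum)
  have hae : ∀ᵐ ω ∂μ, ∀ᵐ y, y ∈ limsupArcs (fun n => X n ω) ℓ :=
    (Measure.ae_ae_comm (measurableSet_setOf_mem_limsupArcs hmeas ℓ)).2 (ae_of_all _ hpoint)
  filter_upwards [hae] with ω hω
  rw [(ae_mem_iff_measure_eq (measurableSet_limsupArcs _ ℓ).nullMeasurableSet).1 hω,
    AddCircle.measure_univ, ENNReal.ofReal_one]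

/-- If `ℓₙ ≤ 1` and `∑ ℓₙ = ∞`, then a.s. the Lebesgue measure of `E_ℓ` equals `1`. -/
theorem stmt1 {Ω : Type*} [MeasurableSpace Ω] (μ : Measure Ω) [IsProbabilityMeasure μ]
    (X : ℕ → Ω → Circle1) (hmeas : ∀ n, Measurable (X n))
    (hindep : iIndepFun X μ)
    (hunif : ∀ n, Measure.map (X n) μ = (volume : Measure Circle1))
    (ℓ : ℕ → ℝ) (hpos : ∀ n, 0 < ℓ n) (hle : ∀ n, ℓ n ≤ 1) (hdiv : ¬ Summable ℓ) :
    ∀ᵐ ω ∂μ, volume (limsupArcs (fun n => X n ω) ℓ) = 1 :=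
  stmt1_general μ X hmeas hindep hunif ℓ hpos hle hdiv
end

section
/- Let (ℓₙ) be a sequence of positive reals converging to 0 and suppose ∑ₙ g(ℓₙ) < ∞ for a gauge function g. Then there exists a gauge function ḡ with ḡ(r)/g(r) → ∞ monotonically as r → 0⁺ and such that ∑ₙ ḡ(ℓₙ) < ∞. -/
/-!
Take `ḡ = φ ∘ g` with `φ t = ∑ₖ 2ᵏ min(t⁺, cₖ)`, where `cₖ ≤ 4⁻ᵏ` is chosen so small that
`∑ₙ min(g(ℓₙ)⁺, cₖ) ≤ 4⁻ᵏ` (dominated convergence as the level tends to `0`). Exchanging the two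
sums gives `∑ₙ φ(g(ℓₙ)) ≤ ∑ₖ 2ᵏ 4⁻ᵏ < ∞`. The single term `k` shows `φ t ≥ 2ᵏ t` for `t ≤ cₖ`,
so `φ t / t → ∞`, and `φ t / t` is nonincreasing because every `min(t, cₖ) / t` is. Composing with
the nondecreasing `g`, which is positive near `0⁺`, transfers these properties to `ḡ / g`, and
`ḡ r / r = (φ (g r) / g r) (g r / r)` is a product of nonnegative nonincreasing factors.
-/

open MeasureTheory ProbabilityTheory Filter Set

/-- A gauge function: nondecreasing near `0`, vanishing and continuous at `0⁺`,
with `r ↦ g r / r` nonincreasing and positive near `0`. -/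
structure IsGauge (g : ℝ → ℝ) : Prop where
  zero : g 0 = 0
  tendsto_zero : Filter.Tendsto g (nhdsWithin 0 (Set.Ioi 0)) (nhds 0)
  mono : ∃ ε > 0, MonotoneOn g (Set.Icc 0 ε)
  ratio_antitone : ∃ ε > 0, AntitoneOn (fun r => g r / r) (Set.Ioc 0 ε)
  ratio_pos : ∃ ε > 0, ∀ r ∈ Set.Ioc 0 ε, 0 < g r / r

/-- The Hausdorff `g`-measure on the circle. -/
noncomputable def hausdorffG (g : ℝ → ℝ) : Measure Circle1 :=
  MeasureTheory.Measure.mkMetric (fun r => ENNReal.ofReal (g r.toReal))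


open scoped Topology

lemma tendsto_tsum_min_nhdsGT_zero {u : ℕ → ℝ} (hu : Summable u) (hu0 : 0 ≤ u) :
    Tendsto (fun c => ∑' n, min (u n) c) (𝓝[>] 0) (𝓝 0) := by
  have hlim : ∀ n, Tendsto (fun c => min (u n) c) (𝓝[>] 0) (𝓝 (min (u n) 0)) := fun n =>
    ((continuous_const.min continuous_id).tendsto 0).mono_left nhdsWithin_le_nhds
  have hbound : ∀ᶠ c in 𝓝[>] (0 : ℝ), ∀ n, ‖min (u n) c‖ ≤ u n := by
    filter_upwards [self_mem_nhdsWithin] with c (hc : 0 < c) n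
    rw [Real.norm_of_nonneg (le_min (hu0 n) hc.le)]
    exact min_le_left _ _
  have hzero : ∀ n, min (u n) 0 = 0 := fun n => min_eq_right (hu0 n)
  simpa only [hzero, tsum_zero] using tendsto_tsum_of_dominated_convergence hu hlim hbound

lemma exists_truncation_levels {u : ℕ → ℝ} (hu : Summable u) :
    ∃ c : ℕ → ℝ, (∀ k, 0 < c k) ∧ (∀ k, c k ≤ 4⁻¹ ^ k) ∧
      ∀ k, ∑' n, min (max (u n) 0) (c k) ≤ 4⁻¹ ^ k := by
  have hu' : Summable fun n => max (u n) 0 :=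
    hu.abs.of_nonneg_of_le (fun _ => le_max_right _ _) fun _ =>
      max_le (le_abs_self _) (abs_nonneg _)
  have hlevel : ∀ k : ℕ, ∃ c, 0 < c ∧ c ≤ 4⁻¹ ^ k ∧ ∑' n, min (max (u n) 0) c ≤ 4⁻¹ ^ k := by
    intro k
    have hk : (0 : ℝ) < 4⁻¹ ^ k := by positivity
    have hsmall := (tendsto_tsum_min_nhdsGT_zero hu' fun _ => le_max_right _ _).eventually
      (ge_mem_nhds hk)
    obtain ⟨c, ⟨hc0, hc⟩, hsum⟩ := Filter.nonempty_of_mem (inter_mem (Ioo_mem_nhdsGT hk) hsmall)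
    exact ⟨c, hc0, hc.le, hsum⟩
  choose c hc0 hc hsum using hlevel
  exact ⟨c, hc0, hc, hsum⟩

lemma antitoneOn_min_div_self {c : ℝ} (hc : 0 ≤ c) :
    AntitoneOn (fun t => min t c / t) (Ioi 0) := by
  intro s (hs : 0 < s) t (ht : 0 < t) hst
  simp only [← min_div_div_right ht.le, ← min_div_div_right hs.le, div_self ht.ne',
    div_self hs.ne']
  gcongr

noncomputable def dyadicTruncSum (c : ℕ → ℝ) (t : ℝ) : ℝ :=
  ∑' k, 2 ^ k * min (max t 0) (c k)

section dyadicTruncSum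

variable {c : ℕ → ℝ}

lemma dyadicTruncSum_term_nonneg (hc0 : ∀ k, 0 ≤ c k) (t : ℝ) (k : ℕ) :
    0 ≤ 2 ^ k * min (max t 0) (c k) :=
  mul_nonneg (by positivity) (le_min (le_max_right _ _) (hc0 k))

lemma dyadicTruncSum_term_le (hc : ∀ k, c k ≤ 4⁻¹ ^ k) (t : ℝ) (k : ℕ) :
    2 ^ k * min (max t 0) (c k) ≤ 2⁻¹ ^ k :=
  calc 2 ^ k * min (max t 0) (c k) ≤ 2 ^ k * 4⁻¹ ^ k := by
        gcongr; exact (min_le_right _ _).trans (hc k)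
    _ = 2⁻¹ ^ k := by rw [← mul_pow]; norm_num

lemma summable_dyadicTruncSum_terms (hc0 : ∀ k, 0 ≤ c k) (hc : ∀ k, c k ≤ 4⁻¹ ^ k) (t : ℝ) :
    Summable fun k => 2 ^ k * min (max t 0) (c k) :=
  (summable_geometric_of_lt_one (by norm_num) (by norm_num)).of_nonneg_of_le
    (dyadicTruncSum_term_nonneg hc0 t) (dyadicTruncSum_term_le hc t)

lemma dyadicTruncSum_zero (hc0 : ∀ k, 0 ≤ c k) : dyadicTruncSum c 0 = 0 := by
  simp [dyadicTruncSum, min_eq_left (hc0 _)]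

lemma continuous_dyadicTruncSum (hc0 : ∀ k, 0 ≤ c k) (hc : ∀ k, c k ≤ 4⁻¹ ^ k) :
    Continuous (dyadicTruncSum c) :=
  continuous_tsum (fun _ => by fun_prop)
    (summable_geometric_of_lt_one (by norm_num) (by norm_num : (2:ℝ)⁻¹ < 1)) fun k t => by
      rw [Real.norm_of_nonneg (dyadicTruncSum_term_nonneg hc0 t k)]
      exact dyadicTruncSum_term_le hc t k

lemma monotone_dyadicTruncSum (hc0 : ∀ k, 0 ≤ c k) (hc : ∀ k, c k ≤ 4⁻¹ ^ k) :
    Monotone (dyadicTruncSum c) := fun s t hst =>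
  (summable_dyadicTruncSum_terms hc0 hc s).tsum_le_tsum (fun k => by gcongr)
    (summable_dyadicTruncSum_terms hc0 hc t)

lemma antitoneOn_dyadicTruncSum_div (hc0 : ∀ k, 0 ≤ c k) (hc : ∀ k, c k ≤ 4⁻¹ ^ k) :
    AntitoneOn (fun t => dyadicTruncSum c t / t) (Ioi 0) := by
  intro s (hs : 0 < s) t (ht : 0 < t) hst
  simp only [dyadicTruncSum, ← tsum_div_const, max_eq_left hs.le, max_eq_left ht.le]
  refine Summable.tsum_le_tsum (fun k => ?_) ?_ ?_
  · simp only [mul_div_assoc]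
    exact mul_le_mul_of_nonneg_left (antitoneOn_min_div_self (hc0 k) hs ht hst) (by positivity)
  · simpa [max_eq_left ht.le] using (summable_dyadicTruncSum_terms hc0 hc t).div_const t
  · simpa [max_eq_left hs.le] using (summable_dyadicTruncSum_terms hc0 hc s).div_const s

lemma pow_le_dyadicTruncSum_div (hc0 : ∀ k, 0 ≤ c k) (hc : ∀ k, c k ≤ 4⁻¹ ^ k) {t : ℝ}
    (ht : 0 < t) {k : ℕ} (htk : t ≤ c k) :
    2 ^ k ≤ dyadicTruncSum c t / t := by
  rw [le_div_iff₀ ht]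
  calc 2 ^ k * t = 2 ^ k * min (max t 0) (c k) := by rw [max_eq_left ht.le, min_eq_left htk]
    _ ≤ dyadicTruncSum c t := (summable_dyadicTruncSum_terms hc0 hc t).le_tsum k
          fun j _ => dyadicTruncSum_term_nonneg hc0 t j

lemma dyadicTruncSum_pos (hc0 : ∀ k, 0 < c k) (hc : ∀ k, c k ≤ 4⁻¹ ^ k) {t : ℝ} (ht : 0 < t) :
    0 < dyadicTruncSum c t :=
  (summable_dyadicTruncSum_terms (fun k => (hc0 k).le) hc t).tsum_pos
    (dyadicTruncSum_term_nonneg (fun k => (hc0 k).le) t) 0 (by simpa [ht.le] using ⟨ht, hc0 0⟩)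

lemma tendsto_dyadicTruncSum_div_atTop (hc0 : ∀ k, 0 < c k) (hc : ∀ k, c k ≤ 4⁻¹ ^ k) :
    Tendsto (fun t => dyadicTruncSum c t / t) (𝓝[>] 0) atTop := by
  refine tendsto_atTop.2 fun b => ?_
  obtain ⟨K, hK⟩ := pow_unbounded_of_one_lt b (by norm_num : (1 : ℝ) < 2)
  filter_upwards [Ioo_mem_nhdsGT (hc0 K)] with t ht
  exact hK.le.trans (pow_le_dyadicTruncSum_div (fun k => (hc0 k).le) hc ht.1 ht.2.le)

lemma summable_dyadicTruncSum_comp (hc0 : ∀ k, 0 ≤ c k) {u : ℕ → ℝ} (hu : Summable u)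
    (hmass : ∀ k, ∑' n, min (max (u n) 0) (c k) ≤ 4⁻¹ ^ k) :
    Summable fun n => dyadicTruncSum c (u n) := by
  have hrows (k : ℕ) : Summable fun n => 2 ^ k * min (max (u n) 0) (c k) :=
    (hu.abs.of_nonneg_of_le (fun _ => le_min (le_max_right _ _) (hc0 k))
      fun _ => (min_le_left _ _).trans (max_le (le_abs_self _) (abs_nonneg _))).mul_left _
  have hcols : Summable fun k => ∑' n, 2 ^ k * min (max (u n) 0) (c k) := by
    refine (summable_geometric_of_lt_one (by norm_num) (by norm_num : (2:ℝ)⁻¹ < 1))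
      |>.of_nonneg_of_le (fun k => tsum_nonneg fun _ => dyadicTruncSum_term_nonneg hc0 _ k)
        fun k => ?_
    calc ∑' n, 2 ^ k * min (max (u n) 0) (c k) = 2 ^ k * ∑' n, min (max (u n) 0) (c k) :=
          tsum_mul_left
      _ ≤ 2 ^ k * 4⁻¹ ^ k := by gcongr; exact hmass k
      _ = 2⁻¹ ^ k := by rw [← mul_pow]; norm_num
  have hjoint : Summable fun p : ℕ × ℕ => 2 ^ p.1 * min (max (u p.2) 0) (c p.1) :=
    (summable_prod_of_nonneg fun p => dyadicTruncSum_term_nonneg hc0 _ _).2 ⟨hrows, hcols⟩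
  exact ((summable_prod_of_nonneg fun p => dyadicTruncSum_term_nonneg hc0 _ _).1
    hjoint.prod_symm).2

end dyadicTruncSum

theorem exists_superlinear_summable_comp {u : ℕ → ℝ} (hu : Summable u) :
    ∃ φ : ℝ → ℝ, Continuous φ ∧ φ 0 = 0 ∧ Monotone φ ∧ (∀ t, 0 < t → 0 < φ t) ∧
      AntitoneOn (fun t => φ t / t) (Ioi 0) ∧ Tendsto (fun t => φ t / t) (𝓝[>] 0) atTop ∧
      Summable fun n => φ (u n) := by
  obtain ⟨c, hc0, hc, hmass⟩ := exists_truncation_levels hu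
  have hc0' : ∀ k, 0 ≤ c k := fun k => (hc0 k).le
  exact ⟨dyadicTruncSum c, continuous_dyadicTruncSum hc0' hc, dyadicTruncSum_zero hc0',
    monotone_dyadicTruncSum hc0' hc, fun _ => dyadicTruncSum_pos hc0 hc,
    antitoneOn_dyadicTruncSum_div hc0' hc, tendsto_dyadicTruncSum_div_atTop hc0 hc,
    summable_dyadicTruncSum_comp hc0' hu hmass⟩

namespace IsGauge

variable {g : ℝ → ℝ}

lemma exists_radius (hg : IsGauge g) : ∃ ε > 0, MonotoneOn g (Icc 0 ε) ∧
    AntitoneOn (fun r => g r / r) (Ioc 0 ε) ∧ ∀ r ∈ Ioc 0 ε, 0 < g r := by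
  obtain ⟨ε₁, hε₁, hmono⟩ := hg.mono
  obtain ⟨ε₂, hε₂, hanti⟩ := hg.ratio_antitone
  obtain ⟨ε₃, hε₃, hpos⟩ := hg.ratio_pos
  have h₁ : min ε₁ (min ε₂ ε₃) ≤ ε₁ := min_le_left _ _
  have h₂ : min ε₁ (min ε₂ ε₃) ≤ ε₂ := (min_le_right _ _).trans (min_le_left _ _)
  have h₃ : min ε₁ (min ε₂ ε₃) ≤ ε₃ := (min_le_right _ _).trans (min_le_right _ _)
  refine ⟨_, lt_min hε₁ (lt_min hε₂ hε₃), hmono.mono (Icc_subset_Icc_right h₁),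
    hanti.mono (Ioc_subset_Ioc_right h₂), fun r hr => ?_⟩
  exact (div_pos_iff_of_pos_right hr.1).1 (hpos r ⟨hr.1, hr.2.trans h₃⟩)

lemma tendsto_nhdsGT (hg : IsGauge g) : Tendsto g (𝓝[>] 0) (𝓝[>] 0) := by
  obtain ⟨ε, hε, -, -, hpos⟩ := hg.exists_radius
  refine tendsto_nhdsWithin_iff.2 ⟨hg.tendsto_zero, ?_⟩
  filter_upwards [Ioc_mem_nhdsGT hε] with r hr
  exact hpos r hr

lemma comp {φ : ℝ → ℝ} (hg : IsGauge g) (hφc : ContinuousAt φ 0) (hφ0 : φ 0 = 0)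
    (hφm : Monotone φ) (hφpos : ∀ t, 0 < t → 0 < φ t)
    (hφanti : AntitoneOn (fun t => φ t / t) (Ioi 0)) : IsGauge (φ ∘ g) := by
  obtain ⟨ε, hε, hgm, hga, hgpos⟩ := hg.exists_radius
  refine ⟨by simp [hg.zero, hφ0], ?_, ⟨ε, hε, hφm.comp_monotoneOn hgm⟩, ⟨ε, hε, ?_⟩,
    ⟨ε, hε, fun r hr => div_pos (hφpos _ (hgpos r hr)) hr.1⟩⟩
  · simpa only [hφ0] using hφc.tendsto.comp hg.tendsto_zero
  · intro r hr s hs hrs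
    have hgr := hgpos r hr
    have hgs := hgpos s hs
    have hφratio : φ (g s) / g s ≤ φ (g r) / g r :=
      hφanti hgr hgs (hgm ⟨hr.1.le, hr.2⟩ ⟨hs.1.le, hs.2⟩ hrs)
    calc φ (g s) / s = φ (g s) / g s * (g s / s) := by field_simp
      _ ≤ φ (g r) / g r * (g r / r) :=
          mul_le_mul hφratio (hga hr hs hrs) (div_pos hgs hs.1).le (div_pos (hφpos _ hgr) hgr).le
      _ = φ (g r) / r := by field_simp

end IsGauge

theorem stmt14_general (g : ℝ → ℝ) (hg : IsGauge g) (ℓ : ℕ → ℝ)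
    (hsum : Summable (fun n => g (ℓ n))) :
    ∃ gbar : ℝ → ℝ, IsGauge gbar ∧
      (∃ ε > (0:ℝ), AntitoneOn (fun r => gbar r / g r) (Set.Ioc 0 ε)) ∧
      Tendsto (fun r => gbar r / g r) (nhdsWithin 0 (Set.Ioi 0)) atTop ∧
      Summable (fun n => gbar (ℓ n)) := by
  obtain ⟨φ, hφc, hφ0, hφm, hφpos, hφanti, hφtop, hφsum⟩ := exists_superlinear_summable_comp hsum
  obtain ⟨ε, hε, hgm, -, hgpos⟩ := hg.exists_radius
  refine ⟨φ ∘ g, hg.comp hφc.continuousAt hφ0 hφm hφpos hφanti, ⟨ε, hε, ?_⟩,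
    hφtop.comp hg.tendsto_nhdsGT, hφsum⟩
  exact hφanti.comp_MonotoneOn (hgm.mono Ioc_subset_Icc_self) fun r hr => hgpos r hr

/-- If `∑ g(ℓₙ) < ∞`, there is a gauge `ḡ ≻ g` (the ratio `ḡ/g` tends monotonically
to `∞` at `0⁺`) with `∑ ḡ(ℓₙ) < ∞`. -/
theorem stmt14 (g : ℝ → ℝ) (hg : IsGauge g) (ℓ : ℕ → ℝ) (hpos : ∀ n, 0 < ℓ n)
    (hlim : Tendsto ℓ atTop (nhds 0)) (hsum : Summable (fun n => g (ℓ n))) :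
    ∃ gbar : ℝ → ℝ, IsGauge gbar ∧
      (∃ ε > (0:ℝ), AntitoneOn (fun r => gbar r / g r) (Set.Ioc 0 ε)) ∧
      Tendsto (fun r => gbar r / g r) (nhdsWithin 0 (Set.Ioi 0)) atTop ∧
      Summable (fun n => gbar (ℓ n)) :=
  stmt14_general g hg ℓ hsum
end
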